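/- Let η : ℤ² → A satisfy P_η(R_{n,k}) ≤ nk for some n, k, and let S ⊆ R_{n,k} be an η-generating set. If ℓ is a one-sided η-nonexpansive direction (a directed rational line through the origin), then S has a boundary edge parallel to ℓ; in particular, some translate of ℓ meets R_{n,k} in at least two lattice points. -/

import Mathlib

open Classical

namespace Nivat

noncomputable section

/-- Embedding of `ℤ × ℤ` into `ℝ × ℝ`. -/
def e (p : ℤ × ℤ) : ℝ × ℝ := ((p.1 : ℝ), (p.2 : ℝ))

/-- A finite set `S ⊆ ℤ²` is convex if `S = conv(S) ∩ ℤ²`. -/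
def IsConvexSet (S : Finset (ℤ × ℤ)) : Prop :=
  ∀ p : ℤ × ℤ, e p ∈ convexHull ℝ (e '' (S : Set (ℤ × ℤ))) → p ∈ S

variable {A : Type*}

/-- The `η`-coloring of `S` induced by the translate by `u`. -/
def pat (η : ℤ × ℤ → A) (S : Finset (ℤ × ℤ)) (u : ℤ × ℤ) : S → A :=
  fun x => η ((x : ℤ × ℤ) + u)

/-- `P_η(S)`: number of distinct `η`-colorings of `S`. -/
def Pc (η : ℤ × ℤ → A) (S : Finset (ℤ × ℤ)) : ℕ :=
  (Set.range (pat η S)).ncard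

/-- Discrepancy `D_η(S) = P_η(S) - |S|`. -/
def Dc (η : ℤ × ℤ → A) (S : Finset (ℤ × ℤ)) : ℤ :=
  (Pc η S : ℤ) - (S.card : ℤ)

/-- Restriction of a coloring of `S` to a subset `T`. -/
def res {S T : Finset (ℤ × ℤ)} (h : T ⊆ S) (f : S → A) : T → A :=
  fun x => f ⟨(x : ℤ × ℤ), h x.2⟩

/-- A coloring `α` of `T` extends uniquely to an `η`-coloring of `S`. -/
def ExtendsUniquely (η : ℤ × ℤ → A) {T S : Finset (ℤ × ℤ)} (h : T ⊆ S) (α : T → A) : Prop :=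
  ∃! β : S → A, β ∈ Set.range (pat η S) ∧ res h β = α

/-- A coloring `α` of `T` has at least two extensions to `η`-colorings of `S`. -/
def ExtendsNonUniquely (η : ℤ × ℤ → A) {T S : Finset (ℤ × ℤ)} (h : T ⊆ S) (α : T → A) : Prop :=
  ∃ β₁ β₂ : S → A, β₁ ∈ Set.range (pat η S) ∧ β₂ ∈ Set.range (pat η S) ∧
    β₁ ≠ β₂ ∧ res h β₁ = α ∧ res h β₂ = α

theorem eraseSub (S : Finset (ℤ × ℤ)) (x : ℤ × ℤ) : S.erase x ⊆ S :=
  fun _ hy => Finset.mem_of_mem_erase hy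

theorem sdiffSub (S T : Finset (ℤ × ℤ)) : S \ T ⊆ S :=
  fun _ hy => (Finset.mem_sdiff.mp hy).1

/-- `x ∈ S` is `η`-generated by `S`: every `η`-coloring of `S \ {x}`
extends uniquely to an `η`-coloring of `S`. -/
def Generated (η : ℤ × ℤ → A) (S : Finset (ℤ × ℤ)) (x : ℤ × ℤ) : Prop :=
  ∀ α ∈ Set.range (pat η (S.erase x)), ExtendsUniquely η (eraseSub S x) α

/-- `x` is an extreme point of the convex polygon `conv(S)`. -/
def IsExtremePt (S : Finset (ℤ × ℤ)) (x : ℤ × ℤ) : Prop :=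
  e x ∈ Set.extremePoints ℝ (convexHull ℝ (e '' (S : Set (ℤ × ℤ))))

/-- A weak `η`-generating set: finite, nonempty, convex, and every extreme
point is `η`-generated. -/
def WeakGenerating (η : ℤ × ℤ → A) (S : Finset (ℤ × ℤ)) : Prop :=
  S.Nonempty ∧ IsConvexSet S ∧ ∀ x ∈ S, IsExtremePt S x → Generated η S x

/-- An `η`-generating set: weak generating and every nonempty proper convex
subset has strictly larger discrepancy. -/
def Generating (η : ℤ × ℤ → A) (S : Finset (ℤ × ℤ)) : Prop :=
  WeakGenerating η S ∧
    ∀ T ⊆ S, T ≠ S → T.Nonempty → IsConvexSet T → Dc η S < Dc η T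

/-- The segment from `e p` to `e q` is a (1-dimensional exposed) boundary edge
of the convex polygon `conv(S)`. -/
def IsEdge (S : Finset (ℤ × ℤ)) (p q : ℤ × ℤ) : Prop :=
  p ≠ q ∧ p ∈ S ∧ q ∈ S ∧ ∃ ℓ : (ℝ × ℝ) →ₗ[ℝ] ℝ, ∃ c : ℝ,
    (∀ x ∈ convexHull ℝ (e '' (S : Set (ℤ × ℤ))), ℓ x ≤ c) ∧
    {x ∈ convexHull ℝ (e '' (S : Set (ℤ × ℤ))) | ℓ x = c} = segment ℝ (e p) (e q)

/-- An edge of `S`, oriented positively (the set lies to the left of `p → q`). -/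
def IsOrientedEdge (S : Finset (ℤ × ℤ)) (p q : ℤ × ℤ) : Prop :=
  IsEdge S p q ∧ ∀ x ∈ S, 0 ≤ (q.1 - p.1) * (x.2 - p.2) - (q.2 - p.2) * (x.1 - p.1)

/-- The lattice points of `S` lying on the edge from `p` to `q`. -/
def edgePts (S : Finset (ℤ × ℤ)) (p q : ℤ × ℤ) : Finset (ℤ × ℤ) :=
  S.filter (fun x => e x ∈ segment ℝ (e p) (e q))

/-- The rectangle `R_{n,k} = [0,n) × [0,k) ∩ ℤ²`. -/
def Rect (n k : ℕ) : Finset (ℤ × ℤ) :=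
  Finset.Ico (0 : ℤ) (n : ℤ) ×ˢ Finset.Ico (0 : ℤ) (k : ℤ)

/-- `η` is aperiodic: no nonzero period vector. -/
def Aperiodic (η : ℤ × ℤ → A) : Prop :=
  ∀ v : ℤ × ℤ, v ≠ 0 → ∃ x : ℤ × ℤ, η (x + v) ≠ η x

/-- Action of a `2 × 2` integer matrix on `ℤ²`. -/
def Mv (M : Matrix (Fin 2) (Fin 2) ℤ) (p : ℤ × ℤ) : ℤ × ℤ :=
  (M 0 0 * p.1 + M 0 1 * p.2, M 1 0 * p.1 + M 1 1 * p.2)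

/-- `u` and `v` are positively parallel (same direction). -/
def PosParallel (u v : ℤ × ℤ) : Prop :=
  ∃ t₁ t₂ : ℤ, 0 < t₁ ∧ 0 < t₂ ∧ t₁ • u = t₂ • v

/-- The directed rational line through the origin with direction `d` is
one-sided `η`-expansive: for some `a, b ∈ ℕ` and `A ∈ SL₂(ℤ)` taking the
downward `y`-axis to the direction `d`, every `(η ∘ A)`-coloring of
`[0,a] × [-b,b]` extends uniquely to `[0,a] × [-b,b] ∪ {(-1,0)}`. -/
def OneSidedExpansive (η : ℤ × ℤ → A) (d : ℤ × ℤ) : Prop :=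
  ∃ a b : ℕ, ∃ M : Matrix (Fin 2) (Fin 2) ℤ, M.det = 1 ∧
    PosParallel (Mv M (0, -1)) d ∧
    ∀ u v : ℤ × ℤ,
      (∀ x : ℤ × ℤ, 0 ≤ x.1 → x.1 ≤ (a : ℤ) → -(b : ℤ) ≤ x.2 → x.2 ≤ (b : ℤ) →
        η (Mv M (x + u)) = η (Mv M (x + v))) →
      η (Mv M ((-1, 0) + u)) = η (Mv M ((-1, 0) + v))

end

end Nivat

/-!
Maximize `y ↦ cross y d` over `S`. If the maximum is attained at two points, the maximizers span
an edge of `conv S` parallel to `d`. Otherwise the maximizer `x₀` is an extreme point, hence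
`η`-generated: the colour at `x₀` is determined by the colours on `S \ {x₀}`, which lies strictly
on one side of the line through `x₀` in direction `d`. After an `SL₂(ℤ)` change of coordinates
this is precisely one-sided expansiveness of `d`.
-/

namespace Nivat

section Faces

variable {𝕜 E : Type*} [Field 𝕜] [LinearOrder 𝕜] [IsStrictOrderedRing 𝕜] [AddCommGroup E]
  [Module 𝕜 E]

theorem isExtreme_sep_eq_of_le {A : Set E} {L : E →ₗ[𝕜] 𝕜} {c : 𝕜} (hA : ∀ x ∈ A, L x ≤ c) :
    IsExtreme 𝕜 A {x ∈ A | L x = c} := by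
  refine ⟨fun x hx => hx.1, fun x₁ hx₁ x₂ hx₂ x ⟨_, hxc⟩ hx => ⟨hx₁, ?_⟩⟩
  have hL : ConvexOn 𝕜 Set.univ L := L.convexOn convex_univ
  exact le_antisymm (hA x₁ hx₁) <| hxc ▸
    hL.le_left_of_right_le (Set.mem_univ _) (Set.mem_univ _) hx (hxc ▸ hA x₂ hx₂)

theorem sep_convexHull_eq_of_le {s : Finset E} {L : E →ₗ[𝕜] 𝕜} {c : 𝕜}
    (hs : ∀ v ∈ s, L v ≤ c) :
    {x ∈ convexHull 𝕜 (s : Set E) | L x = c} = convexHull 𝕜 ↑(s.filter (L · = c)) := by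
  apply subset_antisymm
  · rintro x ⟨hx, hxc⟩
    obtain ⟨w, hw₀, hw₁, rfl⟩ := Finset.mem_convexHull'.1 hx
    -- the slack `c - L v` of every vertex carrying weight must vanish
    have hslack : ∑ v ∈ s, w v * (c - L v) = 0 := by
      simp only [mul_sub, Finset.sum_sub_distrib, ← Finset.sum_mul, hw₁, one_mul]
      rw [← hxc, map_sum, sub_eq_zero]; simp only [map_smul, smul_eq_mul]
    have hw : ∀ v ∈ s, w v ≠ 0 → L v = c := fun v hv hwv => by
      have := (Finset.sum_eq_zero_iff_of_nonneg fun v hv =>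
        mul_nonneg (hw₀ v hv) (sub_nonneg.2 (hs v hv))).1 hslack v hv
      linarith [(mul_eq_zero.1 this).resolve_left hwv]
    refine Finset.mem_convexHull'.2 ⟨w, fun v hv => hw₀ v (Finset.mem_filter.1 hv).1, ?_, ?_⟩
    · rwa [Finset.sum_filter_of_ne hw]
    · exact Finset.sum_filter_of_ne fun v hv hwv => hw v hv (left_ne_zero_of_smul hwv)
  · refine Set.subset_inter (convexHull_mono ?_) ?_
    · exact Finset.coe_subset.2 (Finset.filter_subset _ _)
    · exact convexHull_min (fun v hv => (Finset.mem_filter.1 hv).2) (convex_hyperplane L.isLinear c)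

end Faces

section Lattice

def cross (u v : ℤ × ℤ) : ℤ := u.1 * v.2 - u.2 * v.1

def dot (u v : ℤ × ℤ) : ℤ := u.1 * v.1 + u.2 * v.2

theorem dot_self_pos {d : ℤ × ℤ} (hd : d ≠ 0) : 0 < dot d d := by
  have : d.1 ≠ 0 ∨ d.2 ≠ 0 := by
    by_contra! h
    exact hd (Prod.ext h.1 h.2)
  unfold dot
  rcases this with h | h
  · exact add_pos_of_pos_of_nonneg (mul_self_pos.2 h) (mul_self_nonneg _)
  · exact add_pos_of_nonneg_of_pos (mul_self_nonneg _) (mul_self_pos.2 h)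

theorem cross_sub_left (u v d : ℤ × ℤ) : cross (u - v) d = cross u d - cross v d := by
  simp only [cross, Prod.fst_sub, Prod.snd_sub]; ring

theorem dot_sub_left (u v d : ℤ × ℤ) : dot (u - v) d = dot u d - dot v d := by
  simp only [dot, Prod.fst_sub, Prod.snd_sub]; ring

theorem dot_self_smul_of_cross_eq_zero {a d : ℤ × ℤ} (h : cross a d = 0) :
    dot d d • a = dot a d • d := by
  simp only [cross, dot] at h ⊢
  ext <;> simp only [Prod.smul_fst, Prod.smul_snd, smul_eq_mul]
  · linear_combination d.2 * h
  · linear_combination -d.1 * h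

theorem dot_smul_eq_dot_smul_of_cross_eq_zero {a b d : ℤ × ℤ} (hd : d ≠ 0)
    (ha : cross a d = 0) (hb : cross b d = 0) : dot b d • a = dot a d • b := by
  apply smul_right_injective _ (dot_self_pos hd).ne'
  simp only [smul_comm (dot d d), dot_self_smul_of_cross_eq_zero ha,
    dot_self_smul_of_cross_eq_zero hb, smul_smul, mul_comm]

theorem eq_of_cross_eq_of_dot_eq {a b d : ℤ × ℤ} (hd : d ≠ 0) (hc : cross a d = cross b d)
    (hp : dot a d = dot b d) : a = b := by
  have h := dot_self_smul_of_cross_eq_zero (a := a - b) (d := d)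
    (by rw [cross_sub_left, hc, sub_self])
  have hp' : dot (a - b) d = 0 := by
    simp only [dot, Prod.fst_sub, Prod.snd_sub] at hp ⊢; linarith
  rw [hp', zero_smul, smul_eq_zero] at h
  exact sub_eq_zero.1 (h.resolve_left (dot_self_pos hd).ne')

theorem PosParallel.cross_eq_zero {u v : ℤ × ℤ} (h : PosParallel u v) : cross u v = 0 := by
  obtain ⟨t₁, t₂, ht₁, -, heq⟩ := h
  have h₁ := congrArg Prod.fst heq
  have h₂ := congrArg Prod.snd heq
  simp only [Prod.smul_fst, Prod.smul_snd, smul_eq_mul] at h₁ h₂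
  refine (mul_eq_zero.1 ?_).resolve_left ht₁.ne'
  simp only [cross]
  linear_combination v.2 * h₁ - v.1 * h₂

theorem e_sub (a b : ℤ × ℤ) : e (a - b) = e a - e b := by
  ext <;> simp [e]

theorem e_smul (t : ℤ) (a : ℤ × ℤ) : e (t • a) = (t : ℝ) • e a := by
  ext <;> simp [e]

def crossL (d : ℤ × ℤ) : (ℝ × ℝ) →ₗ[ℝ] ℝ :=
  (d.2 : ℝ) • LinearMap.fst ℝ ℝ ℝ - (d.1 : ℝ) • LinearMap.snd ℝ ℝ ℝ

theorem crossL_e (d y : ℤ × ℤ) : crossL d (e y) = cross y d := by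
  simp [crossL, cross, e]; ring

end Lattice

section LatticeFaces

variable {S : Finset (ℤ × ℤ)} {d : ℤ × ℤ} {c : ℤ}

theorem crossL_le_of_mem_convexHull (hc : ∀ y ∈ S, cross y d ≤ c) {x : ℝ × ℝ}
    (hx : x ∈ convexHull ℝ (e '' (S : Set (ℤ × ℤ)))) : crossL d x ≤ c := by
  refine convexHull_min ?_ (convex_halfSpace_le (crossL d).isLinear (c : ℝ)) hx
  rintro _ ⟨y, hy, rfl⟩
  simpa only [Set.mem_ofPred_eq, crossL_e, Int.cast_le] using hc y hy

theorem sep_convexHull_crossL_eq (hc : ∀ y ∈ S, cross y d ≤ c) :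
    {x ∈ convexHull ℝ (e '' (S : Set (ℤ × ℤ))) | crossL d x = c} =
      convexHull ℝ (e '' ↑(S.filter (cross · d = c))) := by
  rw [← Finset.coe_image, ← Finset.coe_image, sep_convexHull_eq_of_le, Finset.filter_image]
  · simp only [crossL_e, Int.cast_inj]
  · simp only [Finset.mem_image, forall_exists_index, and_imp, forall_apply_eq_imp_iff₂,
      crossL_e, Int.cast_le]
    exact hc

theorem isExtremePt_of_forall_cross_lt {x₀ : ℤ × ℤ} (hx₀ : x₀ ∈ S)
    (h : ∀ y ∈ S, y ≠ x₀ → cross y d < cross x₀ d) : IsExtremePt S x₀ := by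
  have hle : ∀ y ∈ S, cross y d ≤ cross x₀ d := fun y hy =>
    if hyx : y = x₀ then hyx ▸ le_rfl else (h y hy hyx).le
  have hface : S.filter (cross · d = cross x₀ d) = {x₀} := by
    ext y
    simp only [Finset.mem_filter, Finset.mem_singleton]
    refine ⟨fun ⟨hy, hyc⟩ => by_contra fun hyx => (h y hy hyx).ne hyc, ?_⟩
    rintro rfl
    exact ⟨hx₀, rfl⟩
  have := isExtreme_sep_eq_of_le fun x hx => crossL_le_of_mem_convexHull hle hx
  rwa [sep_convexHull_crossL_eq hle, hface, Finset.coe_singleton, Set.image_singleton,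
    convexHull_singleton, isExtreme_singleton] at this

theorem mem_segment_of_cross_eq {p q s : ℤ × ℤ} (hd : d ≠ 0) (hs : cross s d = cross p d)
    (hq : cross q d = cross p d) (hps : dot p d ≤ dot s d) (hsq : dot s d ≤ dot q d)
    (hpq : dot p d < dot q d) :
    e s ∈ segment ℝ (e p) (e q) := by
  have key := congrArg e <| dot_smul_eq_dot_smul_of_cross_eq_zero (a := s - p) (b := q - p) hd
    (by rw [cross_sub_left, hs, sub_self]) (by rw [cross_sub_left, hq, sub_self])
  rw [e_smul, e_smul, e_sub, e_sub] at key
  have hB : (0 : ℝ) < dot (q - p) d := by rw [dot_sub_left]; exact_mod_cast sub_pos.2 hpq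
  rw [segment_eq_image']
  refine ⟨dot (s - p) d / dot (q - p) d, ⟨?_, ?_⟩, ?_⟩
  · rw [dot_sub_left]
    exact div_nonneg (by exact_mod_cast sub_nonneg.2 hps) hB.le
  · rw [div_le_one hB, dot_sub_left, dot_sub_left]
    exact_mod_cast sub_le_sub_right hsq _
  · dsimp only
    rw [div_eq_inv_mul, mul_smul, ← key, smul_smul, inv_mul_cancel₀ hB.ne', one_smul,
      add_sub_cancel]

theorem exists_orientedEdge_of_cross_eq (hd : d ≠ 0) (hc : ∀ y ∈ S, cross y d ≤ c)
    {u v : ℤ × ℤ} (hu : u ∈ S) (hv : v ∈ S) (huv : u ≠ v) (hcu : cross u d = c)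
    (hcv : cross v d = c) : ∃ p q, IsOrientedEdge S p q ∧ PosParallel (q - p) d := by
  set F := S.filter (cross · d = c)
  have huF : u ∈ F := Finset.mem_filter.2 ⟨hu, hcu⟩
  have hvF : v ∈ F := Finset.mem_filter.2 ⟨hv, hcv⟩
  obtain ⟨p, hpF, hp⟩ := F.exists_min_image (dot · d) ⟨u, huF⟩
  obtain ⟨q, hqF, hq⟩ := F.exists_max_image (dot · d) ⟨u, huF⟩
  have hpq : dot p d < dot q d := by
    rcases lt_or_gt_of_ne fun h => huv (eq_of_cross_eq_of_dot_eq hd (hcu.trans hcv.symm) h)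
      with h | h
    · linarith [hp u huF, hq v hvF]
    · linarith [hp v hvF, hq u huF]
  rw [Finset.mem_filter] at hpF hqF
  have hB : 0 < dot (q - p) d := by rw [dot_sub_left]; exact sub_pos.2 hpq
  have hqp : dot d d • (q - p) = dot (q - p) d • d :=
    dot_self_smul_of_cross_eq_zero (by rw [cross_sub_left, hqF.2, hpF.2, sub_self])
  have hface : convexHull ℝ (e '' ↑F) = segment ℝ (e p) (e q) := by
    refine subset_antisymm (convexHull_min ?_ (convex_segment _ _)) ?_
    · rintro _ ⟨s, hsF, rfl⟩
      have hs := Finset.mem_filter.1 hsF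
      exact mem_segment_of_cross_eq hd (hs.2.trans hpF.2.symm) (hqF.2.trans hpF.2.symm)
        (hp s hsF) (hq s hsF) hpq
    · exact segment_subset_convexHull (Set.mem_image_of_mem e (Finset.mem_filter.2 hpF))
        (Set.mem_image_of_mem e (Finset.mem_filter.2 hqF))
  refine ⟨p, q, ⟨⟨?_, hpF.1, hqF.1, crossL d, c, fun x hx => crossL_le_of_mem_convexHull hc hx,
    (sep_convexHull_crossL_eq hc).trans hface⟩, fun x hx => ?_⟩,
    dot d d, dot (q - p) d, dot_self_pos hd, hB, hqp⟩
  · rintro rfl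
    exact lt_irrefl _ hpq
  · have h₁ := congrArg Prod.fst hqp
    have h₂ := congrArg Prod.snd hqp
    have hpc := hpF.2
    simp only [Prod.smul_fst, Prod.smul_snd, Prod.fst_sub, Prod.snd_sub, smul_eq_mul] at h₁ h₂
    -- `q - p` is a positive multiple of `d`, and `p` maximizes `cross · d` on `S`
    have horient : dot d d * ((q.1 - p.1) * (x.2 - p.2) - (q.2 - p.2) * (x.1 - p.1)) =
        dot (q - p) d * (c - cross x d) := by
      simp only [cross] at hpc ⊢
      linear_combination (x.2 - p.2) * h₁ - (x.1 - p.1) * h₂ + dot (q - p) d * hpc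
    exact (mul_nonneg_iff_of_pos_left (dot_self_pos hd)).1
      (horient ▸ mul_nonneg hB.le (sub_nonneg.2 (hc x hx)))

end LatticeFaces

section Expansive

variable {A : Type*}

theorem Generated.apply_add_eq {η : ℤ × ℤ → A} {S : Finset (ℤ × ℤ)} {x₀ : ℤ × ℤ}
    (hgen : Generated η S x₀) (hx₀ : x₀ ∈ S) {u v : ℤ × ℤ}
    (h : ∀ y ∈ S.erase x₀, η (y + u) = η (y + v)) : η (x₀ + u) = η (x₀ + v) := by
  obtain ⟨β, -, huniq⟩ := hgen (pat η (S.erase x₀) u) ⟨u, rfl⟩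
  have hu : pat η S u = β := huniq _ ⟨⟨u, rfl⟩, rfl⟩
  have hv : pat η S v = β := huniq _ ⟨⟨v, rfl⟩, funext fun y => (h y y.2).symm⟩
  exact congrFun (hu.trans hv.symm) ⟨x₀, hx₀⟩

theorem Mv_add (M : Matrix (Fin 2) (Fin 2) ℤ) (x y : ℤ × ℤ) :
    Mv M (x + y) = Mv M x + Mv M y := by
  simp only [Mv, Prod.fst_add, Prod.snd_add, Prod.mk_add_mk]
  ext <;> ring

theorem cross_Mv (M : Matrix (Fin 2) (Fin 2) ℤ) (z : ℤ × ℤ) :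
    cross (Mv M z) (Mv M (0, -1)) = -(M.det * z.1) := by
  simp only [cross, Mv, Matrix.det_fin_two]; ring

theorem Mv_Mv_adjugate {M : Matrix (Fin 2) (Fin 2) ℤ} (hM : M.det = 1) (w : ℤ × ℤ) :
    Mv M (Mv M.adjugate w) = w := by
  rw [Matrix.det_fin_two] at hM
  simp only [Mv, Matrix.adjugate_fin_two, Matrix.of_apply,
    Matrix.cons_val', Matrix.cons_val_zero, Matrix.cons_val_one, Matrix.empty_val',
    Matrix.cons_val_fin_one]
  ext
  · linear_combination w.1 * hM
  · linear_combination w.2 * hM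

theorem exists_det_eq_one_smul_Mv_eq {d : ℤ × ℤ} (hd : d ≠ 0) :
    ∃ M : Matrix (Fin 2) (Fin 2) ℤ, M.det = 1 ∧ ∃ g : ℤ, 0 < g ∧ g • Mv M (0, -1) = d := by
  have hg : 0 < Int.gcd d.1 d.2 := Int.gcd_pos_iff.2 <| by
    by_contra! h
    exact hd (Prod.ext h.1 h.2)
  set g : ℤ := (Int.gcd d.1 d.2 : ℤ)
  obtain ⟨a, b, hab⟩ : IsCoprime (d.1 / g) (d.2 / g) :=
    Int.isCoprime_iff_gcd_eq_one.2 (Int.gcd_div_gcd_div_gcd hg)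
  refine ⟨!![-b, -(d.1 / g); a, -(d.2 / g)], ?_, g, Int.natCast_pos.2 hg, ?_⟩
  · rw [Matrix.det_fin_two_of]
    linear_combination hab
  · simp only [Mv, Matrix.of_apply, Matrix.cons_val', Matrix.cons_val_zero, Matrix.cons_val_one,
      Matrix.empty_val', Matrix.cons_val_fin_one]
    ext <;> simp only [Prod.smul_fst, Prod.smul_snd, smul_eq_mul, mul_zero, zero_add, mul_neg,
      mul_one, neg_neg]
    · exact Int.mul_ediv_cancel' (Int.gcd_dvd_left _ _)
    · exact Int.mul_ediv_cancel' (Int.gcd_dvd_right _ _)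

theorem exists_abs_le_of_finset (W : Finset (ℤ × ℤ)) :
    ∃ a b : ℕ, ∀ z ∈ W, |z.1| ≤ a ∧ |z.2| ≤ b := by
  refine ⟨W.sup (·.1.natAbs), W.sup (·.2.natAbs), fun z hz => ⟨?_, ?_⟩⟩
  · rw [Int.abs_eq_natAbs]
    exact_mod_cast Finset.le_sup (f := (·.1.natAbs)) hz
  · rw [Int.abs_eq_natAbs]
    exact_mod_cast Finset.le_sup (f := (·.2.natAbs)) hz

/-- In the coordinates given by a matrix of `SL₂(ℤ)` taking the downward `y`-axis to `d`, the
finite set `T` lies in a window `[0,a] × [-b,b]` just to the right of the point `(-1,0)` that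
corresponds to `x₀`. -/
theorem oneSidedExpansive_of_determined {η : ℤ × ℤ → A} {d x₀ : ℤ × ℤ} (hd : d ≠ 0)
    (T : Finset (ℤ × ℤ)) (hT : ∀ y ∈ T, cross y d < cross x₀ d)
    (hdet : ∀ u v, (∀ y ∈ T, η (y + u) = η (y + v)) → η (x₀ + u) = η (x₀ + v)) :
    OneSidedExpansive η d := by
  obtain ⟨M, hM, g, hg, hMd⟩ := exists_det_eq_one_smul_Mv_eq hd
  obtain ⟨a, b, hab⟩ := exists_abs_le_of_finset (T.image fun y => Mv M.adjugate (y - x₀))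
  refine ⟨a, b, M, hM, ⟨g, 1, hg, one_pos, by rw [hMd, one_smul]⟩, fun u v hwin => ?_⟩
  have h := hdet (Mv M ((-1, 0) + u) - x₀) (Mv M ((-1, 0) + v) - x₀) fun y hy => ?_
  · simpa only [add_sub_cancel] using h
  set z := Mv M.adjugate (y - x₀)
  have hz : Mv M z = y - x₀ := Mv_Mv_adjugate hM _
  obtain ⟨hz₁, hz₂⟩ := hab z (Finset.mem_image_of_mem _ hy)
  have hz₁pos : 0 < z.1 := by
    have hcross : cross (Mv M z) d = -(g * z.1) := by
      have h := cross_Mv M z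
      rw [← hMd]
      simp only [cross, Prod.smul_fst, Prod.smul_snd, smul_eq_mul] at h ⊢
      linear_combination g * h - g * z.1 * hM
    rw [hz, cross_sub_left] at hcross
    have := hT y hy
    nlinarith
  have hshift : ∀ w, y + (Mv M ((-1, 0) + w) - x₀) = Mv M ((z + (-1, 0)) + w) := fun w => by
    rw [add_assoc z, Mv_add M z, hz]
    abel
  rw [hshift, hshift]
  refine hwin _ ?_ ?_ ?_ ?_ <;> simp only [Prod.fst_add, Prod.snd_add] <;>
    linarith [le_abs_self z.1, abs_le.1 hz₂]

end Expansive

theorem statement16_general {A : Type*} (η : ℤ × ℤ → A)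
    (n k : ℕ)
    (S : Finset (ℤ × ℤ)) (hsub : S ⊆ Rect n k) (hgen : Generating η S)
    (d : ℤ × ℤ) (hd : d ≠ 0) (hne : ¬ OneSidedExpansive η d) :
    (∃ p q : ℤ × ℤ, IsOrientedEdge S p q ∧ PosParallel (q - p) d) ∧
      ∃ x ∈ Rect n k, ∃ y ∈ Rect n k, x ≠ y ∧
        (y.1 - x.1) * d.2 = (y.2 - x.2) * d.1 := by
  obtain ⟨⟨hSne, -, hSgen⟩, -⟩ := hgen
  obtain ⟨x₀, hx₀, hmax⟩ := S.exists_max_image (cross · d) hSne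
  have hedge : ∃ p q : ℤ × ℤ, IsOrientedEdge S p q ∧ PosParallel (q - p) d := by
    by_contra hno
    have hlt : ∀ y ∈ S, y ≠ x₀ → cross y d < cross x₀ d := fun y hy hyx =>
      (hmax y hy).lt_of_ne fun h => hno (exists_orientedEdge_of_cross_eq hd hmax hy hx₀ hyx h rfl)
    have hgen₀ := hSgen x₀ hx₀ (isExtremePt_of_forall_cross_lt hx₀ hlt)
    exact hne <| oneSidedExpansive_of_determined hd (S.erase x₀)
      (fun y hy => hlt y (Finset.mem_of_mem_erase hy) (Finset.ne_of_mem_erase hy))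
      fun _ _ => hgen₀.apply_add_eq hx₀
  refine ⟨hedge, ?_⟩
  obtain ⟨p, q, ⟨⟨hpq, hp, hq, -⟩, -⟩, hpar⟩ := hedge
  have h := hpar.cross_eq_zero
  simp only [cross, Prod.fst_sub, Prod.snd_sub] at h
  exact ⟨p, hsub hp, q, hsub hq, hpq, by linarith⟩

/-- If `P_η(R_{n,k}) ≤ nk`, `S ⊆ R_{n,k}` is an `η`-generating set, and the
directed rational line with direction `d` is one-sided `η`-nonexpansive, then
`S` has a boundary edge parallel to `d`; in particular some translate of the
line meets `R_{n,k}` in at least two lattice points. -/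
theorem statement16 {A : Type*} [Finite A] (η : ℤ × ℤ → A)
    (n k : ℕ) (hn : 1 ≤ n) (hk : 1 ≤ k)
    (hP : Pc η (Rect n k) ≤ n * k)
    (S : Finset (ℤ × ℤ)) (hsub : S ⊆ Rect n k) (hgen : Generating η S)
    (d : ℤ × ℤ) (hd : d ≠ 0) (hne : ¬ OneSidedExpansive η d) :
    (∃ p q : ℤ × ℤ, IsOrientedEdge S p q ∧ PosParallel (q - p) d) ∧
      ∃ x ∈ Rect n k, ∃ y ∈ Rect n k, x ≠ y ∧
        (y.1 - x.1) * d.2 = (y.2 - x.2) * d.1 :=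
  statement16_general η n k S hsub hgen d hd hne

end Nivat
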